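/- Generalized completeness of DPLL (main induction statement): for every valuation Γ and CNF formulas Δ, Θ, if ∅ ∉ Θ, Γ is consistent, and Var(Γ) ∩ Var(Θ) = ∅, then either the sequent Γ ⊢ Δ ∪ Θ is derivable in the DPLL proof system, or there exists a model M with M ⊨ Γ and M ⊨ Δ ∪ Θ. -/
import Mathlib


/-- A literal: a propositional variable (ℕ) with a sign. -/
structure Lit where
  var : ℕ
  sign : Bool
deriving DecidableEq

/-- The opposite literal. -/
def Lit.neg (l : Lit) : Lit := ⟨l.var, !l.sign⟩

/-- A clause: a finite set of literals, read disjunctively. -/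
abbrev Clause := Finset Lit

/-- A CNF formula: a finite set of clauses, read conjunctively. -/
abbrev CNF := Finset Clause

/-- A valuation: a finite set of literals, read conjunctively. -/
abbrev Valu := Finset Lit

/-- A model: a boolean assignment to literals respecting negation. -/
def IsModel (M : Lit → Bool) : Prop := ∀ l : Lit, M l = true ↔ ¬ (M (Lit.neg l) = true)

/-- `M ⊨ Γ` for a valuation (set of literals) `Γ`. -/
def SatVal (M : Lit → Bool) (Γ : Valu) : Prop := ∀ l ∈ Γ, M l = true

/-- `M ⊨ Δ` for a CNF formula `Δ`. -/
def SatCNF (M : Lit → Bool) (Δ : CNF) : Prop := ∀ C ∈ Δ, ∃ l ∈ C, M l = true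

/-- A consistent valuation. -/
def Consistent (Γ : Valu) : Prop := ∀ l ∈ Γ, Lit.neg l ∉ Γ

/-- The DPLL derivability relation `Γ ⊢ Δ`. -/
inductive DPLL : Valu → CNF → Prop
  | conflict (Γ : Valu) (Δ : CNF) : (∅ : Clause) ∈ Δ → DPLL Γ Δ
  | unit (Γ : Valu) (Δ : CNF) (l : Lit) : ({l} : Clause) ∈ Δ →
      DPLL (insert l Γ) (Δ.erase {l}) → DPLL Γ Δ
  | elim (Γ : Valu) (Δ : CNF) (C : Clause) (l : Lit) : l ∈ Γ → l ∈ C → C ∈ Δ →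
      DPLL Γ (Δ.erase C) → DPLL Γ Δ
  | red (Γ : Valu) (Δ : CNF) (C : Clause) (l : Lit) : l ∈ Γ → Lit.neg l ∈ C → C ∈ Δ →
      DPLL Γ (insert (C.erase (Lit.neg l)) (Δ.erase C)) → DPLL Γ Δ
  | split (Γ : Valu) (Δ : CNF) (l : Lit) :
      DPLL (insert l Γ) Δ → DPLL (insert (Lit.neg l) Γ) Δ → DPLL Γ Δ

/-- The sized DPLL derivability relation `Γ ⊢ⁿ Δ`. -/
inductive DPLLn : Valu → ℕ → CNF → Prop
  | conflict (Γ : Valu) (Δ : CNF) : (∅ : Clause) ∈ Δ → DPLLn Γ 0 Δ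
  | unit (Γ : Valu) (Δ : CNF) (l : Lit) (n : ℕ) : ({l} : Clause) ∈ Δ →
      DPLLn (insert l Γ) n (Δ.erase {l}) → DPLLn Γ (n + 1) Δ
  | elim (Γ : Valu) (Δ : CNF) (C : Clause) (l : Lit) (n : ℕ) : l ∈ Γ → l ∈ C → C ∈ Δ →
      DPLLn Γ n (Δ.erase C) → DPLLn Γ (n + 1) Δ
  | red (Γ : Valu) (Δ : CNF) (C : Clause) (l : Lit) (n : ℕ) : l ∈ Γ → Lit.neg l ∈ C → C ∈ Δ →
      DPLLn Γ n (insert (C.erase (Lit.neg l)) (Δ.erase C)) → DPLLn Γ (n + 1) Δ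
  | split (Γ : Valu) (Δ : CNF) (l : Lit) (n m : ℕ) :
      DPLLn (insert l Γ) n Δ → DPLLn (insert (Lit.neg l) Γ) m Δ → DPLLn Γ (n + m + 1) Δ

/-- The sized resolution derivability relation `Δ ⊢ᵣⁿ C`. -/
inductive Res : CNF → ℕ → Clause → Prop
  | sub (Δ : CNF) (C₀ C : Clause) : C₀ ∈ Δ → C₀ ⊆ C → Res Δ 0 C
  | res (Δ : CNF) (C C' : Clause) (l : Lit) (n m : ℕ) :
      Res Δ n (insert l C) → Res Δ m (insert (Lit.neg l) C') → Res Δ (n + m + 1) (C ∪ C')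

@[simp] lemma Lit.neg_neg (l : Lit) : Lit.neg (Lit.neg l) = l := by
  simp [Lit.neg]

@[simp] lemma Lit.neg_var (l : Lit) : (Lit.neg l).var = l.var := rfl

lemma Lit.eq_or_neg_of_var_eq {m l : Lit} (h : m.var = l.var) : m = l ∨ m = Lit.neg l := by
  cases m with | mk v s =>
  cases l with | mk w t =>
  simp only [Lit.neg] at *
  subst h
  cases s <;> cases t <;> simp

/-- The default model extending a consistent valuation. -/
def modelOf (Γ : Valu) : Lit → Bool :=
  fun l => if l ∈ Γ then true else if Lit.neg l ∈ Γ then false else l.sign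

lemma modelOf_isModel {Γ : Valu} (hΓ : Consistent Γ) : IsModel (modelOf Γ) := by
  intro l
  unfold modelOf
  by_cases h1 : l ∈ Γ
  · have h2 : Lit.neg l ∉ Γ := hΓ l h1
    simp [h1, h2]
  · by_cases h2 : Lit.neg l ∈ Γ
    · simp [h1, h2]
    · simp only [h1, h2, if_false, Lit.neg_neg]
      cases l with | mk v s => cases s <;> simp [Lit.neg]

lemma modelOf_satVal (Γ : Valu) : SatVal (modelOf Γ) Γ := by
  intro l hl; simp [modelOf, hl]

/-- If some clause of Δ is falsified by Γ, then Γ ⊢ Δ. -/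
lemma derive_of_false_clause (Γ : Valu) :
    ∀ C : Clause, ∀ Δ : CNF, C ∈ Δ → (∀ l ∈ C, Lit.neg l ∈ Γ) → DPLL Γ Δ := by
  intro C
  induction C using Finset.strongInduction with
  | _ C ih =>
    intro Δ hC hf
    rcases C.eq_empty_or_nonempty with rfl | ⟨m, hm⟩
    · exact DPLL.conflict _ _ hC
    · refine DPLL.red Γ Δ C (Lit.neg m) (hf m hm) (by simpa using hm) hC ?_
      have hnn : Lit.neg (Lit.neg m) = m := Lit.neg_neg m
      rw [hnn]
      exact ih (C.erase m) (Finset.erase_ssubset hm) _ (Finset.mem_insert_self _ _)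
        (fun l hl => hf l (Finset.mem_of_mem_erase hl))

lemma insert_consistent {Γ : Valu} {l : Lit} (hΓ : Consistent Γ)
    (hv : l.var ∉ Γ.image Lit.var) : Consistent (insert l Γ) := by
  have hneq : Lit.neg l ≠ l := by
    cases l with | mk v s => cases s <;> simp [Lit.neg]
  intro m hm
  rcases Finset.mem_insert.mp hm with rfl | hm'
  · intro hc
    rcases Finset.mem_insert.mp hc with hc1 | hc2
    · exact hneq hc1
    · exact hv (Finset.mem_image.mpr ⟨Lit.neg m, hc2, rfl⟩)
  · intro hc
    rcases Finset.mem_insert.mp hc with hc1 | hc2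
    · apply hv
      refine Finset.mem_image.mpr ⟨m, hm', ?_⟩
      rw [← hc1]; simp
    · exact hΓ m hm' hc2

/-- Main induction: completeness for any CNF with consistent Γ. -/
lemma dpll_main (Δ : CNF) : ∀ n : ℕ, ∀ Γ : Valu, Consistent Γ →
    ((Δ.biUnion (fun C => C.image Lit.var)) \ Γ.image Lit.var).card ≤ n →
    DPLL Γ Δ ∨ ∃ M : Lit → Bool, IsModel M ∧ SatVal M Γ ∧ SatCNF M Δ := by
  intro n
  induction n with
  | zero =>
    intro Γ hΓ hcard
    have hsub : (Δ.biUnion (fun C => C.image Lit.var)) ⊆ Γ.image Lit.var := by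
      have := Finset.card_eq_zero.mp (Nat.le_zero.mp hcard)
      intro x hx
      by_contra hxn
      exact absurd this (Finset.ne_empty_of_mem (Finset.mem_sdiff.mpr ⟨hx, hxn⟩))
    by_cases hfc : ∃ C ∈ Δ, ∀ l ∈ C, Lit.neg l ∈ Γ
    · obtain ⟨C, hC, hf⟩ := hfc
      exact Or.inl (derive_of_false_clause Γ C Δ hC hf)
    · push_neg at hfc
      right
      refine ⟨modelOf Γ, modelOf_isModel hΓ, modelOf_satVal Γ, ?_⟩
      intro C hC
      obtain ⟨l, hl, hln⟩ := hfc C hC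
      have hvar : l.var ∈ Γ.image Lit.var := by
        apply hsub
        exact Finset.mem_biUnion.mpr ⟨C, hC, Finset.mem_image.mpr ⟨l, hl, rfl⟩⟩
      obtain ⟨m, hm, hmv⟩ := Finset.mem_image.mp hvar
      rcases Lit.eq_or_neg_of_var_eq hmv with rfl | rfl
      · exact ⟨m, hl, by simp [modelOf, hm]⟩
      · exact absurd hm hln
  | succ k ih =>
    intro Γ hΓ hcard
    set A := Δ.biUnion (fun C => C.image Lit.var) with hA
    rcases (A \ Γ.image Lit.var).eq_empty_or_nonempty with hemp | ⟨v, hv⟩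
    · exact ih Γ hΓ (by rw [hemp]; simp)
    · have hvA : v ∈ A := (Finset.mem_sdiff.mp hv).1
      have hvΓ : v ∉ Γ.image Lit.var := (Finset.mem_sdiff.mp hv).2
      set l : Lit := ⟨v, true⟩ with hl
      have hlv : l.var = v := rfl
      have key : ∀ l' : Lit, l'.var = v →
          DPLL (insert l' Γ) Δ ∨ ∃ M : Lit → Bool, IsModel M ∧ SatVal M (insert l' Γ) ∧ SatCNF M Δ := by
        intro l' hl'v
        have hcons : Consistent (insert l' Γ) := insert_consistent hΓ (hl'v ▸ hvΓ)
        apply ih _ hcons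
        have himg : (insert l' Γ).image Lit.var = insert v (Γ.image Lit.var) := by
          rw [Finset.image_insert, hl'v]
        rw [himg]
        have hsubset : A \ insert v (Γ.image Lit.var) ⊆ (A \ Γ.image Lit.var).erase v := by
          intro x hx
          rcases Finset.mem_sdiff.mp hx with ⟨hx1, hx2⟩
          rw [Finset.mem_insert] at hx2
          push_neg at hx2
          exact Finset.mem_erase.mpr ⟨hx2.1, Finset.mem_sdiff.mpr ⟨hx1, hx2.2⟩⟩
        calc (A \ insert v (Γ.image Lit.var)).card
            ≤ ((A \ Γ.image Lit.var).erase v).card := Finset.card_le_card hsubset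
          _ = (A \ Γ.image Lit.var).card - 1 := Finset.card_erase_of_mem hv
          _ ≤ k := by omega
      rcases key l rfl with h1 | ⟨M, hM, hMΓ, hMΔ⟩
      · rcases key (Lit.neg l) rfl with h2 | ⟨M, hM, hMΓ, hMΔ⟩
        · exact Or.inl (DPLL.split Γ Δ l h1 h2)
        · exact Or.inr ⟨M, hM, fun m hm => hMΓ m (Finset.mem_insert_of_mem hm), hMΔ⟩
      · exact Or.inr ⟨M, hM, fun m hm => hMΓ m (Finset.mem_insert_of_mem hm), hMΔ⟩

/-- Generalized completeness of DPLL (main induction statement). -/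
theorem dpll_completeness_general (Γ : Valu) (Δ Θ : CNF)
    (hΘ : (∅ : Clause) ∉ Θ) (hΓ : Consistent Γ)
    (hdisj : (Γ.image Lit.var) ∩ (Θ.biUnion (fun C => C.image Lit.var)) = ∅) :
    DPLL Γ (Δ ∪ Θ) ∨ ∃ M : Lit → Bool, IsModel M ∧ SatVal M Γ ∧ SatCNF M (Δ ∪ Θ) := by
  exact dpll_main (Δ ∪ Θ) _ Γ hΓ le_rfl
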